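/- For c ∈ K and p ∈ K*, q = p⁻¹, the cyclic partial derivatives of the potential Φ₃ = xyt + pytx - ptxy + yxt - xty - ptyx + (pc/3)t³ in the free algebra K⟨t,x,y⟩ are ∂_x(Φ₃) = yt - pty, ∂_y(Φ₃) = tx - pxt, and ∂_t(Φ₃) = xy - pyx + pct² = -p(yx - p⁻¹xy - ct²). Hence the Jacobian algebra J(Φ₃) is exactly the quantum generalized Heisenberg algebra H_{p⁻¹}(pt, ct²). -/

import Mathlib

/- STATEMENT 14: for c ∈ K, p ∈ K*, q = p⁻¹ (char K ≠ 2, 3), the cyclic partial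
derivatives of the potential
Φ₃ = xyt + p·ytx - p·txy + yxt - xty - p·tyx + (pc/3)·t³
in the free algebra K⟨t,x,y⟩ are ∂_x(Φ₃) = yt - p·ty, ∂_y(Φ₃) = tx - p·xt,
∂_t(Φ₃) = xy - p·yx + pc·t² = -p(yx - p⁻¹xy - c·t²), and the Jacobian algebra
J(Φ₃) is exactly the quantum generalized Heisenberg algebra H_{p⁻¹}(pt, ct²). -/

noncomputable section

open FreeAlgebra Polynomial

variable (K : Type) [Field K]

/-- The monomial in the free algebra given by a word (list of letters). -/
def word (l : List (Fin 3)) : FreeAlgebra K (Fin 3) := (l.map (ι K)).prod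

/-- The cyclic partial derivative of a word `l` with respect to the letter `i`:
the sum over all factorizations `l = u ++ [i] ++ v` of the monomial `v ++ u`. -/
def wordCycDeriv (i : Fin 3) (l : List (Fin 3)) : FreeAlgebra K (Fin 3) :=
  ((List.range l.length).map fun k =>
    if l[k]? = some i then word K (l.drop (k + 1) ++ l.take k) else 0).sum

/-- The cyclic partial derivative with respect to the letter `i`, extended linearly
to the whole free algebra. -/
def cycDeriv (i : Fin 3) (a : FreeAlgebra K (Fin 3)) : FreeAlgebra K (Fin 3) :=
  ((FreeAlgebra.equivMonoidAlgebraFreeMonoid (R := K) (X := Fin 3)) a).coeff.sum fun w c =>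
    c • wordCycDeriv K i (FreeMonoid.toList w)

/-- The relations of the Jacobian algebra `J(Φ)`: each cyclic partial derivative
of the potential `Φ` is set to zero. -/
inductive jacRel (Φ : FreeAlgebra K (Fin 3)) :
    FreeAlgebra K (Fin 3) → FreeAlgebra K (Fin 3) → Prop
  | mk (i : Fin 3) : jacRel Φ (cycDeriv K i Φ) 0

/-- The Jacobian algebra `J(Φ)` of a potential `Φ`. -/
abbrev Jac (Φ : FreeAlgebra K (Fin 3)) := RingQuot (jacRel K Φ)

/-- Relations of `H_q(f,g)`. t = ι 0, x = ι 1, y = ι 2. -/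
inductive qghRel (q : K) (f g : Polynomial K) :
    FreeAlgebra K (Fin 3) → FreeAlgebra K (Fin 3) → Prop
  | r1 : qghRel q f g (ι K (0 : Fin 3) * ι K (1 : Fin 3))
      (ι K (1 : Fin 3) * Polynomial.aeval (ι K (0 : Fin 3)) f)
  | r2 : qghRel q f g (ι K (2 : Fin 3) * ι K (0 : Fin 3))
      (Polynomial.aeval (ι K (0 : Fin 3)) f * ι K (2 : Fin 3))
  | r3 : qghRel q f g (ι K (2 : Fin 3) * ι K (1 : Fin 3) - q • (ι K (1 : Fin 3) * ι K (2 : Fin 3)))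
      (Polynomial.aeval (ι K (0 : Fin 3)) g)

/-- The quantum generalized Heisenberg algebra `H_q(f,g)`. -/
abbrev QGH (q : K) (f g : Polynomial K) := RingQuot (qghRel K q f g)

/-- The potential `Φ₃ = xyt + p·ytx - p·txy + yxt - xty - p·tyx + (pc/3)·t³`,
with t = ι 0, x = ι 1, y = ι 2. -/
def Phi3 (p c : K) : FreeAlgebra K (Fin 3) :=
  ι K (1 : Fin 3) * ι K (2 : Fin 3) * ι K (0 : Fin 3) +
    p • (ι K (2 : Fin 3) * ι K (0 : Fin 3) * ι K (1 : Fin 3)) -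
    p • (ι K (0 : Fin 3) * ι K (1 : Fin 3) * ι K (2 : Fin 3)) +
    ι K (2 : Fin 3) * ι K (1 : Fin 3) * ι K (0 : Fin 3) -
    ι K (1 : Fin 3) * ι K (0 : Fin 3) * ι K (2 : Fin 3) -
    p • (ι K (0 : Fin 3) * ι K (2 : Fin 3) * ι K (1 : Fin 3)) +
    (p * c / 3) • (ι K (0 : Fin 3) ^ 3)

/-! Each cyclic derivative of `Φ₃` is a short computation on its seven monomials: `∂_x` and
`∂_y` pick out the two twisted commutation relations of `H_{p⁻¹}(pt, ct²)`, and `∂_t` is `-p`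
times its third relation, the cubic term contributing `3 · (pc/3) t² = pc t²`. Since `p` is a
unit, both quotients of `K⟨t,x,y⟩` are taken by relations that hold in the other one, so the
identity of the free algebra descends to an isomorphism. -/

namespace RingQuot

variable {R A : Type*} [CommSemiring R] [Semiring A] [Algebra R A] {r s : A → A → Prop}

def algEquivOfRelHolds (hrs : ∀ ⦃a b⦄, r a b → mkAlgHom R s a = mkAlgHom R s b)
    (hsr : ∀ ⦃a b⦄, s a b → mkAlgHom R r a = mkAlgHom R r b) :
    RingQuot r ≃ₐ[R] RingQuot s :=
  AlgEquiv.ofAlgHom (liftAlgHom R ⟨mkAlgHom R s, hrs⟩) (liftAlgHom R ⟨mkAlgHom R r, hsr⟩)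
    (by ext; simp) (by ext; simp)

end RingQuot

namespace Polynomial

variable {R A : Type*} [CommSemiring R] [Semiring A] [Algebra R A]

theorem aeval_C_mul_X_pow_eq_smul (a : R) (x : A) (n : ℕ) : aeval x (C a * X ^ n) = a • x ^ n := by
  rw [C_mul', map_smul, map_pow, aeval_X]

theorem aeval_C_mul_X_eq_smul (a : R) (x : A) : aeval x (C a * X) = a • x := by
  rw [C_mul', map_smul, aeval_X]

end Polynomial

section CyclicDerivative

variable {K}

theorem cycDeriv_add (i : Fin 3) (a b : FreeAlgebra K (Fin 3)) :
    cycDeriv K i (a + b) = cycDeriv K i a + cycDeriv K i b := by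
  simp only [cycDeriv, map_add, MonoidAlgebra.coeff_add]
  exact Finsupp.sum_add_index' (by simp) fun _ _ _ ↦ add_smul _ _ _

theorem cycDeriv_smul (i : Fin 3) (r : K) (a : FreeAlgebra K (Fin 3)) :
    cycDeriv K i (r • a) = r • cycDeriv K i a := by
  simp [cycDeriv, Finsupp.sum_smul_index', Finsupp.smul_sum, mul_smul]

theorem cycDeriv_sub (i : Fin 3) (a b : FreeAlgebra K (Fin 3)) :
    cycDeriv K i (a - b) = cycDeriv K i a - cycDeriv K i b := by
  rw [sub_eq_add_neg, ← neg_one_smul K b, cycDeriv_add, cycDeriv_smul, neg_one_smul,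
    ← sub_eq_add_neg]

theorem equivMonoidAlgebraFreeMonoid_word (l : List (Fin 3)) :
    equivMonoidAlgebraFreeMonoid (word K l) = MonoidAlgebra.single (FreeMonoid.ofList l) 1 := by
  induction l with
  | nil => simp [word]; rfl
  | cons a l ih =>
    rw [word, List.map_cons, List.prod_cons, map_mul, ← word, ih]
    simp [FreeAlgebra.equivMonoidAlgebraFreeMonoid, MonoidAlgebra.of_apply,
      MonoidAlgebra.single_mul_single]

theorem cycDeriv_word (i : Fin 3) (l : List (Fin 3)) :
    cycDeriv K i (word K l) = wordCycDeriv K i l := by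
  simp [cycDeriv, equivMonoidAlgebraFreeMonoid_word]

theorem cycDeriv_ι_mul_ι_mul_ι (i a b c : Fin 3) :
    cycDeriv K i (ι K a * ι K b * ι K c) =
      (if a = i then ι K b * ι K c else 0) + (if b = i then ι K c * ι K a else 0) +
        (if c = i then ι K a * ι K b else 0) := by
  have hword : ι K a * ι K b * ι K c = word K [a, b, c] := by simp [word, mul_assoc]
  rw [hword, cycDeriv_word]
  simp [wordCycDeriv, word, List.range_succ, add_assoc]

end CyclicDerivative

section Phi3

variable {K} (p c : K)

theorem cycDeriv_one_Phi3 :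
    cycDeriv K 1 (Phi3 K p c) =
      ι K (2 : Fin 3) * ι K (0 : Fin 3) - p • (ι K (0 : Fin 3) * ι K (2 : Fin 3)) := by
  simp only [Phi3, pow_three', cycDeriv_add, cycDeriv_sub, cycDeriv_smul, cycDeriv_ι_mul_ι_mul_ι]
  simp

theorem cycDeriv_two_Phi3 :
    cycDeriv K 2 (Phi3 K p c) =
      ι K (0 : Fin 3) * ι K (1 : Fin 3) - p • (ι K (1 : Fin 3) * ι K (0 : Fin 3)) := by
  simp only [Phi3, pow_three', cycDeriv_add, cycDeriv_sub, cycDeriv_smul, cycDeriv_ι_mul_ι_mul_ι]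
  simp

theorem cycDeriv_zero_Phi3 (h3 : (3 : K) ≠ 0) :
    cycDeriv K 0 (Phi3 K p c) =
      ι K (1 : Fin 3) * ι K (2 : Fin 3) - p • (ι K (2 : Fin 3) * ι K (1 : Fin 3)) +
        (p * c) • (ι K (0 : Fin 3) ^ 2) := by
  simp only [Phi3, pow_three', sq, cycDeriv_add, cycDeriv_sub, cycDeriv_smul,
    cycDeriv_ι_mul_ι_mul_ι]
  simp only [one_ne_zero, ↓reduceIte, Fin.reduceEq, add_zero, zero_add, add_sub_cancel_right,
    smul_add, add_right_inj]
  have hthirds : p * c / 3 + p * c / 3 + p * c / 3 = p * c := by field_simp; ring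
  rw [← add_smul, ← add_smul, hthirds]

theorem cycDeriv_zero_Phi3_eq_neg_smul (hp : p ≠ 0) (h3 : (3 : K) ≠ 0) :
    cycDeriv K 0 (Phi3 K p c) =
      (-p) • (ι K (2 : Fin 3) * ι K (1 : Fin 3) - p⁻¹ • (ι K (1 : Fin 3) * ι K (2 : Fin 3)) -
        c • (ι K (0 : Fin 3) ^ 2)) := by
  rw [cycDeriv_zero_Phi3 p c h3]
  match_scalars <;> field_simp

theorem jacRel_Phi3_holds_in_QGH (hp : p ≠ 0) (h3 : (3 : K) ≠ 0) ⦃a b : FreeAlgebra K (Fin 3)⦄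
    (h : jacRel K (Phi3 K p c) a b) :
    RingQuot.mkAlgHom K (qghRel K p⁻¹ (C p * X) (C c * X ^ 2)) a =
      RingQuot.mkAlgHom K (qghRel K p⁻¹ (C p * X) (C c * X ^ 2)) b := by
  have r1 := RingQuot.mkAlgHom_rel K (qghRel.r1 (q := p⁻¹) (f := C p * X) (g := C c * X ^ 2))
  have r2 := RingQuot.mkAlgHom_rel K (qghRel.r2 (q := p⁻¹) (f := C p * X) (g := C c * X ^ 2))
  have r3 := RingQuot.mkAlgHom_rel K (qghRel.r3 (q := p⁻¹) (f := C p * X) (g := C c * X ^ 2))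
  rw [aeval_C_mul_X_eq_smul] at r1 r2
  rw [aeval_C_mul_X_pow_eq_smul] at r3
  obtain ⟨i⟩ := h
  fin_cases i
  · simp [cycDeriv_zero_Phi3_eq_neg_smul p c hp h3, r3]
  · simp [cycDeriv_one_Phi3, r2]
  · simp [cycDeriv_two_Phi3, r1]

theorem qghRel_holds_in_Jac_Phi3 (hp : p ≠ 0) (h3 : (3 : K) ≠ 0) ⦃a b : FreeAlgebra K (Fin 3)⦄
    (h : qghRel K p⁻¹ (C p * X) (C c * X ^ 2) a b) :
    RingQuot.mkAlgHom K (jacRel K (Phi3 K p c)) a =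
      RingQuot.mkAlgHom K (jacRel K (Phi3 K p c)) b := by
  have d0 := RingQuot.mkAlgHom_rel K (jacRel.mk (Φ := Phi3 K p c) 0)
  have d1 := RingQuot.mkAlgHom_rel K (jacRel.mk (Φ := Phi3 K p c) 1)
  have d2 := RingQuot.mkAlgHom_rel K (jacRel.mk (Φ := Phi3 K p c) 2)
  rw [cycDeriv_zero_Phi3_eq_neg_smul p c hp h3] at d0
  rw [cycDeriv_one_Phi3] at d1
  rw [cycDeriv_two_Phi3] at d2
  simp only [map_sub, map_smul, map_zero, smul_eq_zero, neg_eq_zero, hp, false_or,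
    sub_eq_zero] at d0 d1 d2
  rcases h with _ | _ | _
  · rwa [aeval_C_mul_X_eq_smul, mul_smul_comm, map_smul]
  · rwa [aeval_C_mul_X_eq_smul, smul_mul_assoc, map_smul]
  · rwa [aeval_C_mul_X_pow_eq_smul, map_sub, map_smul, map_smul]

end Phi3

theorem stmt14 (p c : K) (hp : p ≠ 0) (h3 : (3 : K) ≠ 0) :
    cycDeriv K 1 (Phi3 K p c) =
      ι K (2 : Fin 3) * ι K (0 : Fin 3) - p • (ι K (0 : Fin 3) * ι K (2 : Fin 3)) ∧
    cycDeriv K 2 (Phi3 K p c) =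
      ι K (0 : Fin 3) * ι K (1 : Fin 3) - p • (ι K (1 : Fin 3) * ι K (0 : Fin 3)) ∧
    cycDeriv K 0 (Phi3 K p c) =
      ι K (1 : Fin 3) * ι K (2 : Fin 3) - p • (ι K (2 : Fin 3) * ι K (1 : Fin 3)) +
        (p * c) • (ι K (0 : Fin 3) ^ 2) ∧
    cycDeriv K 0 (Phi3 K p c) =
      (-p) • (ι K (2 : Fin 3) * ι K (1 : Fin 3) - p⁻¹ • (ι K (1 : Fin 3) * ι K (2 : Fin 3)) -
        c • (ι K (0 : Fin 3) ^ 2)) ∧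
    Nonempty (Jac K (Phi3 K p c) ≃ₐ[K] QGH K p⁻¹ (C p * X) (C c * X ^ 2)) :=
  ⟨cycDeriv_one_Phi3 p c, cycDeriv_two_Phi3 p c, cycDeriv_zero_Phi3 p c h3,
    cycDeriv_zero_Phi3_eq_neg_smul p c hp h3,
    ⟨RingQuot.algEquivOfRelHolds (jacRel_Phi3_holds_in_QGH p c hp h3)
      (qghRel_holds_in_Jac_Phi3 p c hp h3)⟩⟩

end
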